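/- The leader-election protocol on states {L₁, L₂, N} with rules L₁L₂ → L₁N, L₂L₁ → NL₁, L₁N → NL₂, NL₁ → L₂N, L₂N → NL₁, NL₂ → L₁N, L₁L₁ → L₂L₂, L₂L₂ → L₁L₁, NN → NN solves leader election: for any population of size ≥ 3 and any fair execution starting from a configuration with at least one agent in state L₁ or L₂, eventually every configuration in the execution contains exactly one agent in state L₁ or L₂. -/
import Mathlib


inductive LS : Type
  | L1 : LS
  | L2 : LS
  | N : LS
deriving DecidableEq

/-- Rules: L₁L₂→L₁N, L₂L₁→NL₁, L₁N→NL₂, NL₁→L₂N, L₂N→NL₁, NL₂→L₁N,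
L₁L₁→L₂L₂, L₂L₂→L₁L₁, NN→NN. -/
def δL : LS → LS → LS × LS
  | .L1, .L2 => (.L1, .N)
  | .L2, .L1 => (.N, .L1)
  | .L1, .N => (.N, .L2)
  | .N, .L1 => (.L2, .N)
  | .L2, .N => (.N, .L1)
  | .N, .L2 => (.L1, .N)
  | .L1, .L1 => (.L2, .L2)
  | .L2, .L2 => (.L1, .L1)
  | .N, .N => (.N, .N)

/-- Number of leaders (agents in state L₁ or L₂) in a configuration. -/
def leaders (c : Multiset LS) : ℕ := c.count LS.L1 + c.count LS.L2

def Step {Q : Type*} (δ : Q → Q → Q × Q) (c c' : Multiset Q) : Prop :=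
  ∃ q₁ q₂ rest, c = q₁ ::ₘ q₂ ::ₘ rest ∧ c' = (δ q₁ q₂).1 ::ₘ (δ q₁ q₂).2 ::ₘ rest

def IsFair {Q : Type*} (δ : Q → Q → Q × Q) (exec : ℕ → Multiset Q) : Prop :=
  ∀ c c' : Multiset Q, (∀ n, ∃ m, n ≤ m ∧ exec m = c) → Step δ c c' →
    ∀ n, ∃ m, n ≤ m ∧ exec m = c'

instance : Fintype LS := ⟨{LS.L1, LS.L2, LS.N}, fun x => by cases x <;> simp⟩

def lw : LS → ℕ | .L1 => 1 | .L2 => 1 | .N => 0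

lemma leaders_cons (a : LS) (s : Multiset LS) :
    leaders (a ::ₘ s) = lw a + leaders s := by
  cases a <;> simp [leaders, lw, Multiset.count_cons] <;> omega

lemma step_card {c c' : Multiset LS} (h : Step δL c c') : c'.card = c.card := by
  obtain ⟨q1, q2, rest, rfl, rfl⟩ := h; simp

lemma step_leaders_le {c c' : Multiset LS} (h : Step δL c c') : leaders c' ≤ leaders c := by
  obtain ⟨q1, q2, rest, rfl, rfl⟩ := h
  have : lw (δL q1 q2).1 + lw (δL q1 q2).2 ≤ lw q1 + lw q2 := by
    cases q1 <;> cases q2 <;> simp [δL, lw]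
  simp only [leaders_cons]; omega

lemma step_leaders_pos {c c' : Multiset LS} (h : Step δL c c') (hc : 1 ≤ leaders c) :
    1 ≤ leaders c' := by
  obtain ⟨q1, q2, rest, rfl, rfl⟩ := h
  have : 1 ≤ lw q1 + lw q2 → 1 ≤ lw (δL q1 q2).1 + lw (δL q1 q2).2 := by
    cases q1 <;> cases q2 <;> simp [δL, lw]
  simp only [leaders_cons] at *; omega

lemma exists_step {c : Multiset LS} (h : 2 ≤ c.card) : ∃ d, Step δL c d := by
  obtain ⟨a, s, rfl⟩ : ∃ a s, c = a ::ₘ s := by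
    obtain ⟨a, ha⟩ : ∃ a, a ∈ c := Multiset.card_pos_iff_exists_mem.mp (by omega)
    obtain ⟨s, rfl⟩ := Multiset.exists_cons_of_mem ha
    exact ⟨a, s, rfl⟩
  obtain ⟨b, t, rfl⟩ : ∃ b t, s = b ::ₘ t := by
    simp only [Multiset.card_cons] at h
    obtain ⟨b, hb⟩ : ∃ b, b ∈ s := Multiset.card_pos_iff_exists_mem.mp (by omega)
    obtain ⟨t, rfl⟩ := Multiset.exists_cons_of_mem hb
    exact ⟨b, t, rfl⟩
  exact ⟨_, a, b, t, rfl, rfl⟩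

lemma two_step_reduce {c : Multiset LS} (h2 : 2 ≤ leaders c) (h3 : 3 ≤ c.card) :
    ∃ d e, Step δL c d ∧ Step δL d e ∧ leaders e < leaders c := by
  by_cases hboth : LS.L1 ∈ c ∧ LS.L2 ∈ c
  · obtain ⟨s, rfl⟩ := Multiset.exists_cons_of_mem hboth.1
    have h2' : LS.L2 ∈ s := by
      have := hboth.2
      simp only [Multiset.mem_cons] at this
      rcases this with h | h
      · exact absurd h (by simp)
      · exact h
    obtain ⟨r, rfl⟩ := Multiset.exists_cons_of_mem h2'
    refine ⟨LS.L1 ::ₘ LS.N ::ₘ r, LS.N ::ₘ LS.L2 ::ₘ r,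
      ⟨.L1, .L2, r, rfl, rfl⟩, ⟨.L1, .N, r, rfl, rfl⟩, ?_⟩
    simp only [leaders_cons, lw]; omega
  · have hc1 : Multiset.count LS.L1 c = 0 ∨ Multiset.count LS.L2 c = 0 := by
      rcases not_and_or.mp hboth with h | h
      · exact Or.inl (Multiset.count_eq_zero.mpr h)
      · exact Or.inr (Multiset.count_eq_zero.mpr h)
    have hl : leaders c = Multiset.count LS.L1 c + Multiset.count LS.L2 c := rfl
    rcases hc1 with h0 | h0
    · -- count L2 ≥ 2
      have hcnt : 2 ≤ Multiset.count LS.L2 c := by omega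
      have hm : LS.L2 ∈ c := Multiset.count_pos.mp (by omega)
      obtain ⟨s, rfl⟩ := Multiset.exists_cons_of_mem hm
      have hm2 : LS.L2 ∈ s := by
        rw [Multiset.count_cons_self] at hcnt
        exact Multiset.count_pos.mp (by omega)
      obtain ⟨t, rfl⟩ := Multiset.exists_cons_of_mem hm2
      obtain ⟨a, r, rfl⟩ : ∃ a r, t = a ::ₘ r := by
        obtain ⟨a, ha⟩ : ∃ a, a ∈ t := Multiset.card_pos_iff_exists_mem.mp (by
          simp only [Multiset.card_cons] at h3; omega)
        obtain ⟨r, rfl⟩ := Multiset.exists_cons_of_mem ha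
        exact ⟨a, r, rfl⟩
      cases a with
      | L2 =>
        -- c = L2::L2::L2::r ; step L2L2 on first two, then L1L2
        refine ⟨LS.L1 ::ₘ LS.L1 ::ₘ LS.L2 ::ₘ r, LS.L1 ::ₘ LS.N ::ₘ LS.L1 ::ₘ r,
          ⟨.L2, .L2, LS.L2 ::ₘ r, rfl, rfl⟩,
          ⟨.L1, .L2, LS.L1 ::ₘ r, ?_, rfl⟩, ?_⟩
        · rw [Multiset.cons_swap LS.L1 LS.L2]
        · simp only [leaders_cons, lw]; omega
      | L1 =>
        -- c = L2::L2::L1::r = L2::L1::(L2::r); step L2L1 → N::L1::(L2::r); then NL1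
        refine ⟨LS.N ::ₘ LS.L1 ::ₘ LS.L2 ::ₘ r, LS.L2 ::ₘ LS.N ::ₘ LS.L2 ::ₘ r,
          ⟨.L2, .L1, LS.L2 ::ₘ r, ?_, rfl⟩,
          ⟨.N, .L1, LS.L2 ::ₘ r, rfl, rfl⟩, ?_⟩
        · rw [Multiset.cons_swap LS.L2 LS.L1]
        · simp only [leaders_cons, lw]; omega
      | N =>
        -- c = L2::L2::N::r = L2::N::(L2::r); step L2N → N::L1::(L2::r)
        -- = L1::L2::(N::r) after rearr; step L1L2 → L1::N::(N::r)
        refine ⟨LS.N ::ₘ LS.L1 ::ₘ LS.L2 ::ₘ r, LS.L1 ::ₘ LS.N ::ₘ LS.N ::ₘ r,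
          ⟨.L2, .N, LS.L2 ::ₘ r, ?_, rfl⟩,
          ⟨.L1, .L2, LS.N ::ₘ r, ?_, rfl⟩, ?_⟩
        · rw [Multiset.cons_swap LS.L2 LS.N]
        · ext x; simp only [Multiset.count_cons]; omega
        · simp only [leaders_cons, lw]; omega
    · -- count L1 ≥ 2
      have hcnt : 2 ≤ Multiset.count LS.L1 c := by omega
      have hm : LS.L1 ∈ c := Multiset.count_pos.mp (by omega)
      obtain ⟨s, rfl⟩ := Multiset.exists_cons_of_mem hm
      have hm2 : LS.L1 ∈ s := by
        rw [Multiset.count_cons_self] at hcnt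
        exact Multiset.count_pos.mp (by omega)
      obtain ⟨t, rfl⟩ := Multiset.exists_cons_of_mem hm2
      obtain ⟨a, r, rfl⟩ : ∃ a r, t = a ::ₘ r := by
        obtain ⟨a, ha⟩ : ∃ a, a ∈ t := Multiset.card_pos_iff_exists_mem.mp (by
          simp only [Multiset.card_cons] at h3; omega)
        obtain ⟨r, rfl⟩ := Multiset.exists_cons_of_mem ha
        exact ⟨a, r, rfl⟩
      cases a with
      | L1 =>
        -- c = L1::L1::L1::r ; step L1L1 → L2::L2::(L1::r) = L2::L1::(L2::r); step L2L1
        refine ⟨LS.L2 ::ₘ LS.L2 ::ₘ LS.L1 ::ₘ r, LS.N ::ₘ LS.L1 ::ₘ LS.L2 ::ₘ r,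
          ⟨.L1, .L1, LS.L1 ::ₘ r, rfl, rfl⟩,
          ⟨.L2, .L1, LS.L2 ::ₘ r, ?_, rfl⟩, ?_⟩
        · rw [Multiset.cons_swap LS.L2 LS.L1]
        · simp only [leaders_cons, lw]; omega
      | L2 =>
        -- c = L1::L1::L2::r = L1::L2::(L1::r); step L1L2 → L1::N::(L1::r); step L1N
        refine ⟨LS.L1 ::ₘ LS.N ::ₘ LS.L1 ::ₘ r, LS.N ::ₘ LS.L2 ::ₘ LS.L1 ::ₘ r,
          ⟨.L1, .L2, LS.L1 ::ₘ r, ?_, rfl⟩,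
          ⟨.L1, .N, LS.L1 ::ₘ r, rfl, rfl⟩, ?_⟩
        · rw [Multiset.cons_swap LS.L1 LS.L2]
        · simp only [leaders_cons, lw]; omega
      | N =>
        -- c = L1::L1::N::r = L1::N::(L1::r); step L1N → N::L2::(L1::r)
        -- = L2::L1::(N::r); step L2L1 → N::L1::(N::r)
        refine ⟨LS.N ::ₘ LS.L2 ::ₘ LS.L1 ::ₘ r, LS.N ::ₘ LS.L1 ::ₘ LS.N ::ₘ r,
          ⟨.L1, .N, LS.L1 ::ₘ r, ?_, rfl⟩,
          ⟨.L2, .L1, LS.N ::ₘ r, ?_, rfl⟩, ?_⟩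
        · rw [Multiset.cons_swap LS.L1 LS.N]
        · ext x; simp only [Multiset.count_cons]; omega
        · simp only [leaders_cons, lw]; omega


/-- The protocol solves leader election: in every fair execution on a population of
size ≥ 3 starting with at least one leader, eventually every configuration
contains exactly one leader. -/
theorem stmt8 (exec : ℕ → Multiset LS) (hcard : 3 ≤ Multiset.card (exec 0))
    (hinit : 1 ≤ leaders (exec 0))
    (hstep : ∀ n, Step δL (exec n) (exec (n + 1)))
    (hfair : IsFair δL exec) :
    ∃ N, ∀ n, N ≤ n → leaders (exec n) = 1 := by
  have hdec : ∀ n, leaders (exec (n + 1)) ≤ leaders (exec n) :=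
    fun n => step_leaders_le (hstep n)
  have hmono : ∀ m n, m ≤ n → leaders (exec n) ≤ leaders (exec m) := by
    intro m n hmn
    induction n with
    | zero =>
      have hm0 : m = 0 := Nat.le_zero.mp hmn
      subst hm0; exact le_refl _
    | succ n ih =>
      rcases Nat.lt_or_ge m (n + 1) with h | h
      · exact le_trans (hdec n) (ih (by omega))
      · have : m = n + 1 := by omega
        subst this; exact le_refl _
  have hpos : ∀ n, 1 ≤ leaders (exec n) := by
    intro n
    induction n with
    | zero => exact hinit
    | succ n ih => exact step_leaders_pos (hstep n) ih
  have hcards : ∀ n, (exec n).card = (exec 0).card := by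
    intro n
    induction n with
    | zero => rfl
    | succ n ih => rw [step_card (hstep n), ih]
  -- the eventual leader count
  set k := sInf (Set.range fun n => leaders (exec n)) with hk
  obtain ⟨N₀, hN₀⟩ : ∃ N₀, leaders (exec N₀) = k :=
    Nat.sInf_mem (Set.range_nonempty fun n => leaders (exec n))
  have hconst : ∀ n, N₀ ≤ n → leaders (exec n) = k := by
    intro n hn
    refine le_antisymm (hN₀ ▸ hmono N₀ n hn) (Nat.sInf_le ⟨n, rfl⟩)
  have hk1 : 1 ≤ k := hN₀ ▸ hpos N₀
  rcases Nat.lt_or_ge k 2 with hk2 | hk2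
  · exact ⟨N₀, fun n hn => by have := hconst n hn; omega⟩
  -- k ≥ 2: derive a contradiction using fairness
  exfalso
  set M := (exec 0).card with hM
  let g : ℕ → Sym LS M := fun n => ⟨exec n, hcards n⟩
  obtain ⟨cs, hcs⟩ := Finite.exists_infinite_fiber g
  have hinf : (g ⁻¹' {cs}).Infinite := Set.infinite_coe_iff.mp hcs
  have hio : ∀ n, ∃ m, n ≤ m ∧ exec m = (cs : Multiset LS) := by
    intro n
    obtain ⟨m, hm, hlt⟩ := hinf.exists_gt n
    exact ⟨m, le_of_lt hlt, congrArg Subtype.val hm⟩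
  have hlc : leaders (cs : Multiset LS) = k := by
    obtain ⟨m, hm, hme⟩ := hio N₀
    rw [← hme]; exact hconst m hm
  have hcc : 3 ≤ Multiset.card (cs : Multiset LS) := by
    rw [show Multiset.card (cs : Multiset LS) = M from cs.2]; exact hcard
  obtain ⟨d, e, hcd, hde, hlt⟩ := two_step_reduce (by omega) hcc
  have hiod := hfair _ _ hio hcd
  have hioe := hfair _ _ hiod hde
  obtain ⟨m, hm, hme⟩ := hioe N₀
  have h1 := hconst m hm
  rw [hme] at h1
  omega
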